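/- arXiv:1306.3203 — 2 statements merged into one kernel-verified Lean document; each statement's English description precedes it below -/
import Mathlib

section
/- Closed-form exponentiated-gradient solution: for ρ > 0, c ∈ ℝⁿ, and z in the interior of the unit simplex, the minimizer over the unit simplex of x ↦ ⟨c, x⟩ + ρ·KL(x, z) is given componentwise by xᵢ = zᵢ exp(−cᵢ/ρ) / Σⱼ zⱼ exp(−cⱼ/ρ). -/
open Finset

/-!
Writing `S = ∑ⱼ zⱼ exp(-cⱼ/ρ)` and `x⋆` for the tilted distribution, one has
`log (x⋆ᵢ / zᵢ) = -cᵢ/ρ - log S`, so for every `w` of total mass one the objective equals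
`ρ · KL(w, x⋆) - ρ log S`. Gibbs' inequality `KL(w, x⋆) ≥ 0 = KL(x⋆, x⋆)` then shows that
`x⋆` is the minimizer.
-/

section

variable {ι : Type*} [Fintype ι]

noncomputable def relEntropy (w z : ι → ℝ) : ℝ := ∑ i, w i * Real.log (w i / z i)

noncomputable def expTilt (z c : ι → ℝ) (ρ : ℝ) (i : ι) : ℝ :=
  z i * Real.exp (-c i / ρ) / ∑ j, z j * Real.exp (-c j / ρ)

theorem relEntropy_self (x : ι → ℝ) : relEntropy x x = 0 := by
  refine sum_eq_zero fun i _ => ?_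
  rcases eq_or_ne (x i) 0 with h | h
  · simp [h]
  · simp [div_self h]

theorem sub_le_mul_log_div {w x : ℝ} (hw : 0 ≤ w) (hx : 0 < x) :
    w - x ≤ w * Real.log (w / x) := by
  have h := mul_nonneg hx.le (InformationTheory.klFun_nonneg (div_nonneg hw hx.le))
  rw [InformationTheory.klFun] at h
  have hx' : x ≠ 0 := hx.ne'
  have : x * (w / x * Real.log (w / x) + 1 - w / x) = w * Real.log (w / x) + x - w := by
    field_simp
  linarith

/-- Gibbs' inequality. -/
theorem relEntropy_nonneg {w x : ι → ℝ} (hw : ∀ i, 0 ≤ w i) (hx : ∀ i, 0 < x i)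
    (hsum : ∑ i, x i ≤ ∑ i, w i) : 0 ≤ relEntropy w x :=
  calc (0 : ℝ) ≤ ∑ i, (w i - x i) := by rw [sum_sub_distrib]; linarith
    _ ≤ relEntropy w x := sum_le_sum fun i _ => sub_le_mul_log_div (hw i) (hx i)

theorem relEntropy_eq_add {w x z : ι → ℝ} (hx : ∀ i, x i ≠ 0) (hz : ∀ i, z i ≠ 0) :
    relEntropy w z = relEntropy w x + ∑ i, w i * Real.log (x i / z i) := by
  rw [relEntropy, relEntropy, ← sum_add_distrib]
  refine sum_congr rfl fun i _ => ?_
  rcases eq_or_ne (w i) 0 with h | h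
  · simp [h]
  · rw [← mul_add, ← Real.log_mul (div_ne_zero h (hx i)) (div_ne_zero (hx i) (hz i)),
      div_mul_div_cancel₀ (hx i)]

section Tilt

variable {z c : ι → ℝ} {ρ : ℝ}

theorem sum_expTilt (hS : ∑ j, z j * Real.exp (-c j / ρ) ≠ 0) : ∑ i, expTilt z c ρ i = 1 := by
  simp only [expTilt]
  rw [← sum_div, div_self hS]

theorem expTilt_pos [Nonempty ι] (hz : ∀ i, 0 < z i) (i : ι) : 0 < expTilt z c ρ i :=
  div_pos (mul_pos (hz i) (Real.exp_pos _))
    (sum_pos (fun j _ => mul_pos (hz j) (Real.exp_pos _)) univ_nonempty)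

theorem log_expTilt_div (hz : ∀ i, z i ≠ 0) (hS : ∑ j, z j * Real.exp (-c j / ρ) ≠ 0) (i : ι) :
    Real.log (expTilt z c ρ i / z i) = -c i / ρ - Real.log (∑ j, z j * Real.exp (-c j / ρ)) := by
  have hdiv : expTilt z c ρ i / z i = Real.exp (-c i / ρ) / ∑ j, z j * Real.exp (-c j / ρ) := by
    unfold expTilt
    field_simp [hz i]
  rw [hdiv, Real.log_div (Real.exp_ne_zero _) hS, Real.log_exp]

theorem inner_add_mul_relEntropy_eq (hρ : ρ ≠ 0) (hz : ∀ i, z i ≠ 0)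
    (hS : ∑ j, z j * Real.exp (-c j / ρ) ≠ 0) (w : ι → ℝ) :
    ∑ i, c i * w i + ρ * relEntropy w z =
      ρ * relEntropy w (expTilt z c ρ) -
        ρ * Real.log (∑ j, z j * Real.exp (-c j / ρ)) * ∑ i, w i := by
  have hx : ∀ i, expTilt z c ρ i ≠ 0 := fun i =>
    div_ne_zero (mul_ne_zero (hz i) (Real.exp_ne_zero _)) hS
  have hlog : ρ * ∑ i, w i * Real.log (expTilt z c ρ i / z i) =
      ∑ i, (-(c i * w i) - ρ * Real.log (∑ j, z j * Real.exp (-c j / ρ)) * w i) := by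
    rw [mul_sum]
    refine sum_congr rfl fun i _ => ?_
    rw [log_expTilt_div hz hS]
    field_simp
  rw [relEntropy_eq_add hx hz, mul_add, hlog, sum_sub_distrib, sum_neg_distrib, ← mul_sum]
  ring

end Tilt

end

theorem exponentiated_gradient_closed_form_general {n : ℕ} (hn : 0 < n)
    (c z : Fin n → ℝ) (ρ : ℝ) (hρ : 0 < ρ)
    (hz0 : ∀ i, 0 < z i) :
    let xstar : Fin n → ℝ :=
      fun i => z i * Real.exp (-c i / ρ) / ∑ j, z j * Real.exp (-c j / ρ)
    let J : (Fin n → ℝ) → ℝ :=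
      fun x => (∑ i, c i * x i) + ρ * ∑ i, x i * Real.log (x i / z i)
    (∀ i, 0 ≤ xstar i) ∧ (∑ i, xstar i) = 1 ∧
    ∀ w : Fin n → ℝ, (∀ i, 0 ≤ w i) → (∑ i, w i) = 1 → J xstar ≤ J w := by
  intro xstar J
  have : Nonempty (Fin n) := Fin.pos_iff_nonempty.mp hn
  have hS : ∑ j, z j * Real.exp (-c j / ρ) ≠ 0 :=
    (sum_pos (fun j _ => mul_pos (hz0 j) (Real.exp_pos _)) univ_nonempty).ne'
  have hx : ∀ i, 0 < expTilt z c ρ i := expTilt_pos hz0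
  have hx1 : ∑ i, expTilt z c ρ i = 1 := sum_expTilt hS
  refine ⟨fun i => (hx i).le, hx1, fun w hw hw1 => ?_⟩
  have hJ := inner_add_mul_relEntropy_eq hρ.ne' (fun i => (hz0 i).ne') hS
  change ∑ i, c i * expTilt z c ρ i + ρ * relEntropy (expTilt z c ρ) z ≤
    ∑ i, c i * w i + ρ * relEntropy w z
  rw [hJ, hJ, relEntropy_self, hx1, hw1]
  have := mul_nonneg hρ.le (relEntropy_nonneg hw hx (by rw [hx1, hw1]))
  linarith

/-- Closed-form exponentiated-gradient solution: for ρ > 0, c ∈ ℝⁿ and z in the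
interior of the unit simplex, the minimizer over the simplex of
`x ↦ ⟪c,x⟫ + ρ·KL(x,z)` is `xᵢ = zᵢ exp(-cᵢ/ρ) / Σⱼ zⱼ exp(-cⱼ/ρ)`. -/
theorem exponentiated_gradient_closed_form {n : ℕ} (hn : 0 < n)
    (c z : Fin n → ℝ) (ρ : ℝ) (hρ : 0 < ρ)
    (hz0 : ∀ i, 0 < z i) (hz1 : ∑ i, z i = 1) :
    let xstar : Fin n → ℝ :=
      fun i => z i * Real.exp (-c i / ρ) / ∑ j, z j * Real.exp (-c j / ρ)
    let J : (Fin n → ℝ) → ℝ :=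
      fun x => (∑ i, c i * x i) + ρ * ∑ i, x i * Real.log (x i / z i)
    (∀ i, 0 ≤ xstar i) ∧ (∑ i, xstar i) = 1 ∧
    ∀ w : Fin n → ℝ, (∀ i, 0 ≤ w i) → (∑ i, w i) = 1 → J xstar ≤ J w :=
  exponentiated_gradient_closed_form_general hn c z ρ hρ hz0
end

section
/- Subgradient-based objective bound (one-step ADMM inequality for the x-update): suppose f is convex and x_{t+1} satisfies the first-order optimality condition −Aᵀ(y_t + ρ(−∇φ(c − Ax_{t+1}) + ∇φ(Bz_t))) ∈ ∂f(x_{t+1}), and Ax* + Bz* = c. Then f(x_{t+1}) − f(x*) ≤ −⟨y_t, Ax_{t+1} + Bz* − c⟩ + ρ(B_φ(Bz*, Bz_t) − B_φ(Bz*, c − Ax_{t+1}) − B_φ(c − Ax_{t+1}, Bz_t)). -/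
/-!
Testing the subgradient inequality at `x*` and using `A x* = c - B z*` bounds
`f x_{t+1} - f x*` by `-⟪w, A x_{t+1} + B z* - c⟫`, where `w` is the dual vector in the
inclusion. The `∇φ`-part of `w` paired with this residual is exactly the three-point
combination `B_φ(Bz*, Bz_t) - B_φ(Bz*, c - A x_{t+1}) - B_φ(c - A x_{t+1}, Bz_t)`.
-/

open RealInnerProductSpace

section Bregman

variable {E : Type*} [NormedAddCommGroup E] [InnerProductSpace ℝ E]

/-- `φ'` plays the role of `∇φ`. -/
def bregmanDiv (φ : E → ℝ) (φ' : E → E) (u v : E) : ℝ :=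
  φ u - φ v - ⟪φ' v, u - v⟫

theorem bregmanDiv_three_point (φ : E → ℝ) (φ' : E → E) (u v w : E) :
    bregmanDiv φ φ' u v - bregmanDiv φ φ' u w - bregmanDiv φ φ' w v = ⟪φ' w - φ' v, u - w⟫ := by
  have hsplit : u - v = (u - w) + (w - v) := by abel
  simp only [bregmanDiv, hsplit, inner_add_right, inner_sub_left]
  ring

end Bregman

theorem sub_le_inner_of_neg_adjoint_subgradient
    {E F : Type*} [NormedAddCommGroup E] [InnerProductSpace ℝ E] [CompleteSpace E]
    [NormedAddCommGroup F] [InnerProductSpace ℝ F] [CompleteSpace F]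
    {f : E → ℝ} {A : E →L[ℝ] F} {w : F} {x : E}
    (hsub : ∀ u, f x + ⟪-(ContinuousLinearMap.adjoint A) w, u - x⟫ ≤ f u) (x' : E) :
    f x - f x' ≤ -⟪w, A x - A x'⟫ := by
  have h := hsub x'
  rw [inner_neg_left, ContinuousLinearMap.adjoint_inner_left, map_sub, ← neg_sub (A x),
    inner_neg_right, neg_neg] at h
  linarith

theorem badmm_x_update_bound_general {m n₁ n₂ : ℕ}
    (f : EuclideanSpace ℝ (Fin n₁) → ℝ)
    (φ : EuclideanSpace ℝ (Fin m) → ℝ)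
    (φ' : EuclideanSpace ℝ (Fin m) → EuclideanSpace ℝ (Fin m))
    (A : EuclideanSpace ℝ (Fin n₁) →L[ℝ] EuclideanSpace ℝ (Fin m))
    (B : EuclideanSpace ℝ (Fin n₂) →L[ℝ] EuclideanSpace ℝ (Fin m))
    (c : EuclideanSpace ℝ (Fin m)) (ρ : ℝ)
    (xnext xstar : EuclideanSpace ℝ (Fin n₁))
    (zt zstar : EuclideanSpace ℝ (Fin n₂))
    (yt : EuclideanSpace ℝ (Fin m))
    (hsub : ∀ u, f xnext +
      ⟪-(ContinuousLinearMap.adjoint A)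
          (yt + ρ • (-(φ' (c - A xnext)) + φ' (B zt))), u - xnext⟫ ≤ f u)
    (hfeas : A xstar + B zstar = c) :
    f xnext - f xstar ≤
      -⟪yt, A xnext + B zstar - c⟫
        + ρ * ((φ (B zstar) - φ (B zt) - ⟪φ' (B zt), B zstar - B zt⟫)
          - (φ (B zstar) - φ (c - A xnext) - ⟪φ' (c - A xnext), B zstar - (c - A xnext)⟫)
          - (φ (c - A xnext) - φ (B zt) - ⟪φ' (B zt), (c - A xnext) - B zt⟫)) := by
  have hdescent := sub_le_inner_of_neg_adjoint_subgradient hsub xstar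
  have hresidual : A xnext - A xstar = A xnext + B zstar - c := by rw [← hfeas]; abel
  have hthree := bregmanDiv_three_point φ φ' (B zstar) (B zt) (c - A xnext)
  have hresidual' : B zstar - (c - A xnext) = A xnext + B zstar - c := by abel
  rw [hresidual', inner_sub_left] at hthree
  rw [hresidual, inner_add_left, real_inner_smul_left, inner_add_left, inner_neg_left]
    at hdescent
  unfold bregmanDiv at hthree
  linear_combination hdescent - ρ * hthree

/-- One-step ADMM inequality for the x-update: if f is convex,
`-Aᵀ(y_t + ρ(-∇φ(c - A x_{t+1}) + ∇φ(B z_t))) ∈ ∂f(x_{t+1})` and `A x* + B z* = c`,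
then `f(x_{t+1}) - f(x*) ≤ -⟪y_t, A x_{t+1} + B z* - c⟫ +
ρ(B_φ(Bz*, Bz_t) - B_φ(Bz*, c - A x_{t+1}) - B_φ(c - A x_{t+1}, B z_t))`. -/
theorem badmm_x_update_bound {m n₁ n₂ : ℕ}
    (f : EuclideanSpace ℝ (Fin n₁) → ℝ) (hf : ConvexOn ℝ Set.univ f)
    (φ : EuclideanSpace ℝ (Fin m) → ℝ)
    (φ' : EuclideanSpace ℝ (Fin m) → EuclideanSpace ℝ (Fin m))
    (hφ : ∀ v, HasGradientAt φ (φ' v) v)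
    (A : EuclideanSpace ℝ (Fin n₁) →L[ℝ] EuclideanSpace ℝ (Fin m))
    (B : EuclideanSpace ℝ (Fin n₂) →L[ℝ] EuclideanSpace ℝ (Fin m))
    (c : EuclideanSpace ℝ (Fin m)) (ρ : ℝ) (hρ : 0 < ρ)
    (xnext xstar : EuclideanSpace ℝ (Fin n₁))
    (zt zstar : EuclideanSpace ℝ (Fin n₂))
    (yt : EuclideanSpace ℝ (Fin m))
    (hsub : ∀ u, f xnext +
      ⟪-(ContinuousLinearMap.adjoint A)
          (yt + ρ • (-(φ' (c - A xnext)) + φ' (B zt))), u - xnext⟫ ≤ f u)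
    (hfeas : A xstar + B zstar = c) :
    f xnext - f xstar ≤
      -⟪yt, A xnext + B zstar - c⟫
        + ρ * ((φ (B zstar) - φ (B zt) - ⟪φ' (B zt), B zstar - B zt⟫)
          - (φ (B zstar) - φ (c - A xnext) - ⟪φ' (c - A xnext), B zstar - (c - A xnext)⟫)
          - (φ (c - A xnext) - φ (B zt) - ⟪φ' (B zt), (c - A xnext) - B zt⟫)) :=
  badmm_x_update_bound_general f φ φ' A B c ρ xnext xstar zt zstar yt hsub hfeas
end
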